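/- Let X = (ℤ/2ℤ)² and define a 3-coloured graph γ on X by setting, for distinct x, y ∈ X: γ({x,y}) = 1 if x + y = (1,0), γ({x,y}) = 2 if x + y = (0,1), and γ({x,y}) = 0 otherwise (i.e., if x + y = (1,1)). Then Aut(γ) = { t_g : g ∈ (ℤ/2ℤ)² }, the group of all translations t_g : x ↦ x + g of (ℤ/2ℤ)². -/
import Mathlib


/-- `A` is precisely the automorphism group of the `k`-coloured graph `γ` on `X`. -/
def IsColGraphAutGroup {X : Type*} {k : ℕ} (γ : Sym2 X → Fin k)
    (A : Subgroup (Equiv.Perm X)) : Prop :=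
  ∀ σ : Equiv.Perm X, σ ∈ A ↔ ∀ x y : X, x ≠ y → γ s(σ x, σ y) = γ s(x, y)

/-- The regular permutation group of a finite abelian group `G`: the subgroup of
`Sym(G)` consisting of all translations `t_g : x ↦ x + g`. -/
def translations (G : Type*) [AddCommGroup G] : Subgroup (Equiv.Perm G) where
  carrier := {σ | ∃ g : G, σ = Equiv.addRight g}
  one_mem' := ⟨0, by ext x; simp⟩
  mul_mem' := by
    rintro σ τ ⟨g, rfl⟩ ⟨h, rfl⟩
    exact ⟨h + g, by ext x; simp [add_assoc]⟩
  inv_mem' := by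
    rintro σ ⟨g, rfl⟩
    exact ⟨-g, by ext x; simp⟩

/-- The 3-coloured graph on `(ℤ/2ℤ)²` colouring `{x,y}` by `1` if `x + y = (1,0)`,
by `2` if `x + y = (0,1)`, and by `0` otherwise. -/
def gamma15 : Sym2 (ZMod 2 × ZMod 2) → Fin 3 :=
  Sym2.lift ⟨fun x y =>
    if x + y = ((1 : ZMod 2), (0 : ZMod 2)) then 1
    else if x + y = ((0 : ZMod 2), (1 : ZMod 2)) then 2
    else 0,
    fun x y => by dsimp only; rw [add_comm]⟩

private def col (a : ZMod 2 × ZMod 2) : Fin 3 :=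
  if a = ((1 : ZMod 2), (0 : ZMod 2)) then 1
  else if a = ((0 : ZMod 2), (1 : ZMod 2)) then 2
  else 0

private lemma gamma15_eq (x y : ZMod 2 × ZMod 2) : gamma15 s(x, y) = col (x + y) := rfl

private lemma col_inj : ∀ a b : ZMod 2 × ZMod 2, a ≠ 0 → b ≠ 0 → col a = col b → a = b := by
  decide

private lemma myTrans : ∀ g x y : ZMod 2 × ZMod 2, x + g + (y + g) = x + y := by decide

private lemma myAddZero : ∀ a b : ZMod 2 × ZMod 2, a + b = 0 ↔ a = b := by decide

private lemma sum_eq (σ : Equiv.Perm (ZMod 2 × ZMod 2))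
    (h : ∀ x y : ZMod 2 × ZMod 2, x ≠ y → gamma15 s(σ x, σ y) = gamma15 s(x, y))
    (x y : ZMod 2 × ZMod 2) (hxy : x ≠ y) : σ x + σ y = x + y := by
  have hs : σ x ≠ σ y := fun h' => hxy (σ.injective h')
  have hc := h x y hxy
  rw [gamma15_eq, gamma15_eq] at hc
  exact col_inj _ _ (fun h0 => hs ((myAddZero _ _).mp h0))
    (fun h0 => hxy ((myAddZero _ _).mp h0)) hc

/-- The automorphism group of the above 3-coloured graph on `(ℤ/2ℤ)²` is exactly the
group of translations of `(ℤ/2ℤ)²`. -/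
theorem statement15 : IsColGraphAutGroup gamma15 (translations (ZMod 2 × ZMod 2)) := by
  intro σ
  constructor
  · rintro ⟨g, rfl⟩ x y hxy
    rw [gamma15_eq, gamma15_eq]
    congr 1
    exact myTrans g x y
  · intro h
    refine ⟨σ 0, Equiv.ext fun x => ?_⟩
    simp only [Equiv.coe_addRight]
    by_cases hx : x = 0
    · simp [hx]
    · have := sum_eq σ h x 0 hx
      rw [add_zero] at this
      have h2 : σ x + σ 0 + σ 0 = x + σ 0 := by rw [this]
      rwa [add_assoc, (myAddZero (σ 0) (σ 0)).mpr rfl, add_zero] at h2
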